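/- arXiv:1709.02561 — 4 statements merged into one kernel-verified Lean document; each statement's English description precedes it below -/
import Mathlib

section
/- The rational function V(g,h,e) = (1 + 2eh)/e² is a first integral of the constant-control (u=1) vector field: at every point with e ≠ 0, the Lie derivative of V along f(g,h,e) = (-(he+1)h, (he+1)g, ge²) is zero. -/
/-! With `∂V/∂h = 2/e` and `∂V/∂e = -2(1 + eh)/e³`, the two nonzero terms of `⟨∇V, f⟩` are
`2g(he + 1)/e` and `-2g(1 + eh)/e`, which cancel. -/

lemma hasDerivAt_firstIntegral_h (e h : ℝ) (he : e ≠ 0) :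
    HasDerivAt (fun x : ℝ => (1 + 2 * e * x) / e ^ 2) (2 / e) h :=
  ((((hasDerivAt_id h).const_mul (2 * e)).const_add 1).div_const (e ^ 2)).congr_deriv
    (by field_simp)

lemma hasDerivAt_firstIntegral_e (h e : ℝ) (he : e ≠ 0) :
    HasDerivAt (fun x : ℝ => (1 + 2 * x * h) / x ^ 2) (-2 * (1 + e * h) / e ^ 3) e := by
  have hnum : HasDerivAt (fun x : ℝ => 1 + 2 * x * h) (2 * h) e := by
    simpa using (((hasDerivAt_id e).const_mul 2).mul_const h).const_add 1
  have hden : HasDerivAt (fun x : ℝ => x ^ 2) (2 * e) e := by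
    simpa [mul_comm] using hasDerivAt_pow 2 e
  exact (hnum.div hden (pow_ne_zero 2 he)).congr_deriv (by field_simp; ring)

/-- The rational function `V(g,h,e) = (1 + 2*e*h)/e²` is a first integral of the
constant-control (`u = 1`) vector field `f(g,h,e) = (-(he+1)h, (he+1)g, ge²)`:
at every point with `e ≠ 0`, the Lie derivative `⟨∇V, f⟩` vanishes. The partial
derivatives of `V` are expressed with `deriv`. -/
theorem Vcst_first_integral_const_control (g h e : ℝ) (he : e ≠ 0) :
    deriv (fun _ : ℝ => (1 + 2 * e * h) / e ^ 2) g * (-(h * e + 1) * h)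
      + deriv (fun x : ℝ => (1 + 2 * e * x) / e ^ 2) h * ((h * e + 1) * g)
      + deriv (fun x : ℝ => (1 + 2 * x * h) / x ^ 2) e * (g * e ^ 2) = 0 := by
  rw [deriv_const, (hasDerivAt_firstIntegral_h e h he).deriv,
    (hasDerivAt_firstIntegral_e h e he).deriv]
  field_simp
  ring
end

section
/- For the proportional-control (u = -h) vector field on ℝ³, the Lie derivative of V(g,h,e) = (1+2eh)/e² at every point with e ≠ 0 equals -2g(h+1)/e; in particular, if e > 0, g > 0, and h ≥ -1, then the Lie derivative of V is nonpositive. -/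
section

variable {𝕜 : Type*} [NontriviallyNormedField 𝕜]

theorem hasDerivAt_add_mul_div_const (a b c x : 𝕜) :
    HasDerivAt (fun y => (a + b * y) / c) (b / c) x := by
  simpa using (((hasDerivAt_id x).const_mul b).const_add a).div_const c

theorem hasDerivAt_add_mul_div_sq (a b : 𝕜) {x : 𝕜} (hx : x ≠ 0) :
    HasDerivAt (fun y => (a + b * y) / y ^ 2) (-(2 * a + b * x) / x ^ 3) x := by
  have hnum : HasDerivAt (fun y => a + b * y) b x := by
    simpa using ((hasDerivAt_id x).const_mul b).const_add a
  refine (hnum.div (hasDerivAt_pow 2 x) (pow_ne_zero 2 hx)).congr_deriv ?_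
  field_simp
  ring

end

/-- For the proportional-control (`u = -h`) vector field
`f(g,h,e) = (-(he-h)h, (he-h)g, ge²)`, the Lie derivative of
`V(g,h,e) = (1+2eh)/e²` at any point with `e ≠ 0` equals `-2g(h+1)/e`;
in particular if `e > 0`, `g > 0` and `h ≥ -1` the Lie derivative is
nonpositive. -/
theorem Vcst_lie_deriv_prop_control (g h e : ℝ) (he : e ≠ 0) :
    (deriv (fun _ : ℝ => (1 + 2 * e * h) / e ^ 2) g * (-(h * e - h) * h)
        + deriv (fun x : ℝ => (1 + 2 * e * x) / e ^ 2) h * ((h * e - h) * g)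
        + deriv (fun x : ℝ => (1 + 2 * x * h) / x ^ 2) e * (g * e ^ 2)
      = -2 * g * (h + 1) / e)
    ∧ (0 < e → 0 < g → -1 ≤ h →
        deriv (fun _ : ℝ => (1 + 2 * e * h) / e ^ 2) g * (-(h * e - h) * h)
          + deriv (fun x : ℝ => (1 + 2 * e * x) / e ^ 2) h * ((h * e - h) * g)
          + deriv (fun x : ℝ => (1 + 2 * x * h) / x ^ 2) e * (g * e ^ 2) ≤ 0) := by
  have d_h := (hasDerivAt_add_mul_div_const 1 (2 * e) (e ^ 2) h).deriv
  have d_e : deriv (fun x : ℝ => (1 + 2 * x * h) / x ^ 2) e = -(2 * 1 + 2 * h * e) / e ^ 3 := by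
    simpa only [mul_right_comm 2 h] using (hasDerivAt_add_mul_div_sq 1 (2 * h) he).deriv
  have lie_deriv : deriv (fun _ : ℝ => (1 + 2 * e * h) / e ^ 2) g * (-(h * e - h) * h)
        + deriv (fun x : ℝ => (1 + 2 * e * x) / e ^ 2) h * ((h * e - h) * g)
        + deriv (fun x : ℝ => (1 + 2 * x * h) / x ^ 2) e * (g * e ^ 2)
      = -2 * g * (h + 1) / e := by
    rw [deriv_const, d_h, d_e]
    field_simp
    ring
  refine ⟨lie_deriv, fun he_pos hg_pos hh => ?_⟩
  rw [lie_deriv]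
  exact div_nonpos_of_nonpos_of_nonneg
    (mul_nonpos_of_nonpos_of_nonneg (by linarith) (by linarith)) he_pos.le
end

section
/- Let (g,h,e,d) : ℝ → ℝ⁴ be a solution on an interval [0,T] of the ODE system ġ = -(he+1)h, ḣ = (he+1)g, ė = ge², ḋ = -g (constant control u=1), with d(t) > 0 and d(t)·e(t) = 1 for all t ∈ [0,T]. Then d(t)² + 2d(t)h(t) = d(0)² + 2d(0)h(0) for all t ∈ [0,T]. In particular, if d(0)² + 2d(0)h(0) ≤ 0 then d(t)² + 2d(t)h(t) ≤ 0 for all t ∈ [0,T]. -/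
/-! Along the constant-control flow, `d' = -g` and `h' = (he + 1) g`, so the derivative of
`d² + 2dh` is `2gh(de - 1)`, which vanishes on the constraint `de = 1`. A function with zero
derivative on an interval is constant there. -/

theorem constant_of_hasDerivAt_zero {E : Type*} [NormedAddCommGroup E] [NormedSpace ℝ E]
    {f : ℝ → E} {a b : ℝ} (hf : ∀ x ∈ Set.Icc a b, HasDerivAt f 0 x) :
    ∀ x ∈ Set.Icc a b, f x = f a :=
  constant_of_has_deriv_right_zero (fun x hx => (hf x hx).continuousAt.continuousWithinAt)
    fun x hx => (hf x (Set.Ico_subset_Icc_self hx)).hasDerivWithinAt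

def Vcst (d h : ℝ) : ℝ := d ^ 2 + 2 * d * h

theorem hasDerivAt_Vcst {d h : ℝ → ℝ} {d' h' t : ℝ} (hd : HasDerivAt d d' t)
    (hh : HasDerivAt h h' t) :
    HasDerivAt (fun s => Vcst (d s) (h s)) (2 * (d t + h t) * d' + 2 * d t * h') t := by
  have hV : HasDerivAt (fun s => Vcst (d s) (h s)) _ t :=
    (hd.pow 2).add ((hd.const_mul 2).mul hh)
  exact hV.congr_deriv (by ring)

theorem hasDerivAt_Vcst_along_const_control {g h e d : ℝ → ℝ} {t : ℝ}
    (hh : HasDerivAt h ((h t * e t + 1) * g t) t) (hd : HasDerivAt d (-g t) t)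
    (hde : d t * e t = 1) :
    HasDerivAt (fun s => Vcst (d s) (h s)) 0 t := by
  convert hasDerivAt_Vcst hd hh using 1
  linear_combination (-2 * h t * g t) * hde

theorem Vcst_constant_along_const_control_general (T : ℝ)
    (g h e d : ℝ → ℝ)
    (hh : ∀ t ∈ Set.Icc (0 : ℝ) T, HasDerivAt h ((h t * e t + 1) * g t) t)
    (hd : ∀ t ∈ Set.Icc (0 : ℝ) T, HasDerivAt d (-(g t)) t)
    (hde : ∀ t ∈ Set.Icc (0 : ℝ) T, d t * e t = 1) :
    (∀ t ∈ Set.Icc (0 : ℝ) T,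
        (d t) ^ 2 + 2 * d t * h t = (d 0) ^ 2 + 2 * d 0 * h 0)
    ∧ ((d 0) ^ 2 + 2 * d 0 * h 0 ≤ 0 →
        ∀ t ∈ Set.Icc (0 : ℝ) T, (d t) ^ 2 + 2 * d t * h t ≤ 0) := by
  have conserved : ∀ t ∈ Set.Icc (0 : ℝ) T, Vcst (d t) (h t) = Vcst (d 0) (h 0) :=
    constant_of_hasDerivAt_zero fun t ht =>
      hasDerivAt_Vcst_along_const_control (hh t ht) (hd t ht) (hde t ht)
  exact ⟨conserved, fun h0 t ht => (conserved t ht).trans_le h0⟩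

/-- Along any solution on `[0,T]` of the constant-control (`u = 1`) system
`ġ = -(he+1)h, ḣ = (he+1)g, ė = ge², ḋ = -g` with `d > 0` and `d*e = 1`
throughout, the quantity `d² + 2dh` is constant; in particular if it is
initially `≤ 0` it stays `≤ 0`. -/
theorem Vcst_constant_along_const_control (T : ℝ) (hT : 0 ≤ T)
    (g h e d : ℝ → ℝ)
    (hg : ∀ t ∈ Set.Icc (0 : ℝ) T, HasDerivAt g (-(h t * e t + 1) * h t) t)
    (hh : ∀ t ∈ Set.Icc (0 : ℝ) T, HasDerivAt h ((h t * e t + 1) * g t) t)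
    (he : ∀ t ∈ Set.Icc (0 : ℝ) T, HasDerivAt e (g t * (e t) ^ 2) t)
    (hd : ∀ t ∈ Set.Icc (0 : ℝ) T, HasDerivAt d (-(g t)) t)
    (hdpos : ∀ t ∈ Set.Icc (0 : ℝ) T, 0 < d t)
    (hde : ∀ t ∈ Set.Icc (0 : ℝ) T, d t * e t = 1) :
    (∀ t ∈ Set.Icc (0 : ℝ) T,
        (d t) ^ 2 + 2 * d t * h t = (d 0) ^ 2 + 2 * d 0 * h 0)
    ∧ ((d 0) ^ 2 + 2 * d 0 * h 0 ≤ 0 →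
        ∀ t ∈ Set.Icc (0 : ℝ) T, (d t) ^ 2 + 2 * d t * h t ≤ 0) :=
  Vcst_constant_along_const_control_general T g h e d hh hd hde
end

section
/- Let (g,h,e,d) : [0,T] → ℝ⁴ be a solution of ġ = -(he-h)h, ḣ = (he-h)g, ė = ge², ḋ = -g (proportional control u = -h) such that for all t ∈ [0,T]: d(t) > 0, g(t)² + h(t)² = 1, and g(t) > √2/2. If d(0)² + 2d(0)h(0) ≤ 0, then d(t)² + 2d(t)h(t) ≤ 0 for all t ∈ [0,T]. -/
/-!
Along the proportional-control flow the Lyapunov function `V = d² + 2dh` satisfies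
`V̇ = 2(d + h)ḋ + 2dḣ = -2gd(h + 1)`, the cross terms cancelling because `de = 1`.
On the guard `g > √2/2 > 0`, with `d > 0` and `h ≥ -1` on the unit circle, this is `≤ 0`,
so `V` is antitone on `[0, T]` and stays below its initial value `V(0) ≤ 0`.
-/

open Set

theorem antitoneOn_of_hasDerivAt_nonpos {D : Set ℝ} (hD : Convex ℝ D) {f f' : ℝ → ℝ}
    (hf : ∀ x ∈ D, HasDerivAt f (f' x) x) (hf' : ∀ x ∈ D, f' x ≤ 0) : AntitoneOn f D :=
  antitoneOn_of_hasDerivWithinAt_nonpos hD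
    (fun x hx => (hf x hx).continuousAt.continuousWithinAt)
    (fun x hx => (hf x (interior_subset hx)).hasDerivWithinAt)
    (fun x hx => hf' x (interior_subset hx))

theorem neg_one_le_of_sq_add_sq_eq_one {g h : ℝ} (hcirc : g ^ 2 + h ^ 2 = 1) : -1 ≤ h :=
  (abs_le.mp ((sq_le_one_iff_abs_le_one h).mp (by nlinarith [sq_nonneg g]))).1

theorem hasDerivAt_sq_add_two_mul_mul {d h : ℝ → ℝ} {d' h' t : ℝ}
    (hd : HasDerivAt d d' t) (hh : HasDerivAt h h' t) :
    HasDerivAt (fun s => d s ^ 2 + 2 * d s * h s) (2 * (d t + h t) * d' + 2 * d t * h') t :=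
  ((hd.pow 2).add ((hd.const_mul 2).mul hh)).congr_deriv (by ring)

theorem hasDerivAt_lyapunov_prop_control {g h e d : ℝ → ℝ} {t : ℝ}
    (hh : HasDerivAt h ((h t * e t - h t) * g t) t) (hd : HasDerivAt d (-(g t)) t)
    (hde : d t * e t = 1) :
    HasDerivAt (fun s => d s ^ 2 + 2 * d s * h s) (-(2 * g t * d t * (h t + 1))) t :=
  (hasDerivAt_sq_add_two_mul_mul hd hh).congr_deriv (by linear_combination 2 * g t * h t * hde)

theorem lyapunov_deriv_prop_control_nonpos {g h d : ℝ} (hg : 0 ≤ g) (hd : 0 ≤ d)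
    (hcirc : g ^ 2 + h ^ 2 = 1) : -(2 * g * d * (h + 1)) ≤ 0 := by
  have hh : 0 ≤ h + 1 := by linarith [neg_one_le_of_sq_add_sq_eq_one hcirc]
  exact neg_nonpos.mpr (by positivity)

theorem Vcst_invariant_prop_control_general (T : ℝ)
    (g h e d : ℝ → ℝ)
    (hh : ∀ t ∈ Set.Icc (0 : ℝ) T, HasDerivAt h ((h t * e t - h t) * g t) t)
    (hd : ∀ t ∈ Set.Icc (0 : ℝ) T, HasDerivAt d (-(g t)) t)
    (hdpos : ∀ t ∈ Set.Icc (0 : ℝ) T, 0 < d t)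
    (hde : ∀ t ∈ Set.Icc (0 : ℝ) T, d t * e t = 1)
    (hcirc : ∀ t ∈ Set.Icc (0 : ℝ) T, (g t) ^ 2 + (h t) ^ 2 = 1)
    (hguard : ∀ t ∈ Set.Icc (0 : ℝ) T, Real.sqrt 2 / 2 < g t)
    (h0 : (d 0) ^ 2 + 2 * d 0 * h 0 ≤ 0) :
    ∀ t ∈ Set.Icc (0 : ℝ) T, (d t) ^ 2 + 2 * d t * h t ≤ 0 := by
  have hanti : AntitoneOn (fun s => d s ^ 2 + 2 * d s * h s) (Icc 0 T) :=
    antitoneOn_of_hasDerivAt_nonpos (convex_Icc 0 T)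
      (fun t ht => hasDerivAt_lyapunov_prop_control (hh t ht) (hd t ht) (hde t ht))
      (fun t ht => lyapunov_deriv_prop_control_nonpos
        ((div_nonneg (Real.sqrt_nonneg 2) zero_le_two).trans (hguard t ht).le)
        (hdpos t ht).le (hcirc t ht))
  intro t ht
  exact (hanti ⟨le_rfl, ht.1.trans ht.2⟩ ht ht.1).trans h0

/-- Along any solution on `[0,T]` of the proportional-control (`u = -h`) system
`ġ = -(he-h)h, ḣ = (he-h)g, ė = ge², ḋ = -g` with `d > 0`, `d*e = 1` (by
construction of `e = 1/d`), `g² + h² = 1` and `g > √2/2` throughout, the set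
`{d² + 2dh ≤ 0}` is positively invariant: if `d(0)² + 2d(0)h(0) ≤ 0` then
`d(t)² + 2d(t)h(t) ≤ 0` for all `t ∈ [0,T]`. -/
theorem Vcst_invariant_prop_control (T : ℝ) (hT : 0 ≤ T)
    (g h e d : ℝ → ℝ)
    (hg : ∀ t ∈ Set.Icc (0 : ℝ) T, HasDerivAt g (-(h t * e t - h t) * h t) t)
    (hh : ∀ t ∈ Set.Icc (0 : ℝ) T, HasDerivAt h ((h t * e t - h t) * g t) t)
    (he : ∀ t ∈ Set.Icc (0 : ℝ) T, HasDerivAt e (g t * (e t) ^ 2) t)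
    (hd : ∀ t ∈ Set.Icc (0 : ℝ) T, HasDerivAt d (-(g t)) t)
    (hdpos : ∀ t ∈ Set.Icc (0 : ℝ) T, 0 < d t)
    (hde : ∀ t ∈ Set.Icc (0 : ℝ) T, d t * e t = 1)
    (hcirc : ∀ t ∈ Set.Icc (0 : ℝ) T, (g t) ^ 2 + (h t) ^ 2 = 1)
    (hguard : ∀ t ∈ Set.Icc (0 : ℝ) T, Real.sqrt 2 / 2 < g t)
    (h0 : (d 0) ^ 2 + 2 * d 0 * h 0 ≤ 0) :
    ∀ t ∈ Set.Icc (0 : ℝ) T, (d t) ^ 2 + 2 * d t * h t ≤ 0 :=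
  Vcst_invariant_prop_control_general T g h e d hh hd hdpos hde hcirc hguard h0
end
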